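/- arXiv:2108.07710 — 4 statements merged into one kernel-verified Lean document; each statement's English description precedes it below -/
import Mathlib

section
/- Let θ ≥ 1, a ≥ 0, and Δ ≥ θ. Then Γ(Δ + a + 1 − θ)·Γ(Δ) / (Γ(Δ + a)·Γ(Δ + 1 − θ)) ≤ 1. -/
/-! Since `log ∘ Γ` is convex on `(0, ∞)`, its increments over intervals of a fixed length `a`
grow with the left endpoint; comparing the increments at `Δ + 1 - θ ≤ Δ` and exponentiating
gives `Γ(Δ + 1 - θ + a) Γ(Δ) ≤ Γ(Δ + 1 - θ) Γ(Δ + a)`. -/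

variable {𝕜 : Type*} [Field 𝕜] [LinearOrder 𝕜] [IsStrictOrderedRing 𝕜] {s : Set 𝕜} {f : 𝕜 → 𝕜}

theorem ConvexOn.map_add_add_map_le (hf : ConvexOn 𝕜 s f) {x y a : 𝕜} (hx : x ∈ s)
    (hya : y + a ∈ s) (hxy : x ≤ y) (ha : 0 ≤ a) :
    f (x + a) + f y ≤ f x + f (y + a) := by
  rcases (show x ≤ y + a by linarith).eq_or_lt with hxya | hxya
  · obtain rfl : a = 0 := by linarith
    rw [add_zero, add_zero, add_comm]
  -- `x + a` and `y` are the two convex combinations of `x` and `y + a` with swapped weights.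
  have hd : 0 < y + a - x := sub_pos.2 hxya
  have hwa : 0 ≤ a / (y + a - x) := div_nonneg ha hd.le
  have hwy : 0 ≤ (y - x) / (y + a - x) := div_nonneg (sub_nonneg.2 hxy) hd.le
  have hsum : (y - x) / (y + a - x) + a / (y + a - x) = 1 := by field_simp; ring
  have h₁ := hf.2 hx hya hwy hwa hsum
  have h₂ := hf.2 hx hya hwa hwy (by rw [add_comm, hsum])
  simp only [smul_eq_mul] at h₁ h₂
  rw [show (y - x) / (y + a - x) * x + a / (y + a - x) * (y + a) = x + a by field_simp; ring]
    at h₁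
  rw [show a / (y + a - x) * x + (y - x) / (y + a - x) * (y + a) = y by field_simp; ring] at h₂
  linear_combination h₁ + h₂ + (f x + f (y + a)) * hsum

theorem Real.Gamma_add_mul_Gamma_le {x y a : ℝ} (hx : 0 < x) (hxy : x ≤ y) (ha : 0 ≤ a) :
    Gamma (x + a) * Gamma y ≤ Gamma x * Gamma (y + a) := by
  have hy : 0 < y := hx.trans_le hxy
  have hlog := convexOn_log_Gamma.map_add_add_map_le hx (show 0 < y + a by positivity) hxy ha
  simp only [Function.comp_apply] at hlog
  have hxa : 0 < Gamma (x + a) := Gamma_pos_of_pos (by positivity)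
  have hya : 0 < Gamma (y + a) := Gamma_pos_of_pos (by positivity)
  have hΓx := Gamma_pos_of_pos hx
  have hΓy := Gamma_pos_of_pos hy
  rwa [← log_le_log_iff (by positivity) (by positivity), log_mul hxa.ne' hΓy.ne',
    log_mul hΓx.ne' hya.ne']

/-- For `θ ≥ 1`, `a ≥ 0`, `Δ ≥ θ`:
`Γ(Δ+a+1−θ)·Γ(Δ) / (Γ(Δ+a)·Γ(Δ+1−θ)) ≤ 1`. -/
theorem gamma_ratio_le_one_first (θ a Δ : ℝ) (hθ : 1 ≤ θ) (ha : 0 ≤ a) (hΔ : θ ≤ Δ) :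
    Real.Gamma (Δ + a + 1 - θ) * Real.Gamma Δ /
      (Real.Gamma (Δ + a) * Real.Gamma (Δ + 1 - θ)) ≤ 1 := by
  have hx : 0 < Δ + 1 - θ := by linarith
  have hΔa : 0 < Δ + a := by linarith
  rw [div_le_one (mul_pos (Real.Gamma_pos_of_pos hΔa) (Real.Gamma_pos_of_pos hx)),
    show Δ + a + 1 - θ = Δ + 1 - θ + a by ring, mul_comm (Real.Gamma (Δ + a))]
  exact Real.Gamma_add_mul_Gamma_le hx (by linarith) ha
end

section
/- Let θ ≥ 1, Δ ≥ θ, and 0 ≤ a ≤ Δ − θ. Then Γ(Δ + 1)·Γ(Δ − a) / (Γ(Δ + θ)·Γ(Δ − a − θ + 1)) ≤ 1. -/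
/-!
`log ∘ Γ` is convex on `(0, ∞)`, and the increments `f (t + h) - f t` of a convex function grow
with `t`. Comparing the increments of `log Γ` over the step `θ - 1` from the base points
`Δ - a - θ + 1 ≤ Δ + 1` gives `Γ(Δ + 1) Γ(Δ - a) ≤ Γ(Δ + θ) Γ(Δ - a - θ + 1)`.
-/

open Set

theorem ConvexOn.map_add_add_map_le_s3 {𝕜 β : Type*} [Field 𝕜] [LinearOrder 𝕜]
    [IsStrictOrderedRing 𝕜] [AddCommGroup β] [PartialOrder β] [IsOrderedAddMonoid β]
    [Module 𝕜 β] {s : Set 𝕜} {f : 𝕜 → β} (hf : ConvexOn 𝕜 s f) {x y h : 𝕜}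
    (hx : x ∈ s) (hyh : y + h ∈ s) (hxy : x ≤ y) (hh : 0 ≤ h) :
    f (x + h) + f y ≤ f x + f (y + h) := by
  rcases hxy.eq_or_lt with rfl | hxy
  · rw [add_comm]
  have hL : 0 < y + h - x := by linarith
  -- `x + h` and `y` are the convex combinations of `x` and `y + h` with swapped weights `p, q`
  set p := (y - x) / (y + h - x) with hp_def
  set q := h / (y + h - x) with hq_def
  have hp : 0 ≤ p := div_nonneg (sub_nonneg.2 hxy.le) hL.le
  have hq : 0 ≤ q := div_nonneg hh hL.le
  have hpq : p + q = 1 := by simp only [hp_def, hq_def]; field_simp; ring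
  have hxh : f (x + h) ≤ p • f x + q • f (y + h) := by
    convert hf.2 hx hyh hp hq hpq using 2
    simp only [smul_eq_mul, hp_def, hq_def]; field_simp; ring
  have hy : f y ≤ q • f x + p • f (y + h) := by
    convert hf.2 hx hyh hq hp (by rwa [add_comm]) using 2
    simp only [smul_eq_mul, hp_def, hq_def]; field_simp; ring
  calc f (x + h) + f y
      ≤ (p • f x + q • f (y + h)) + (q • f x + p • f (y + h)) := add_le_add hxh hy
    _ = f x + f (y + h) := by
      rw [add_add_add_comm, ← add_smul, ← add_smul, add_comm q, hpq, one_smul, one_smul]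

theorem Real.Gamma_mul_Gamma_add_le {x y h : ℝ} (hx : 0 < x) (hxy : x ≤ y) (hh : 0 ≤ h) :
    Real.Gamma y * Real.Gamma (x + h) ≤ Real.Gamma (y + h) * Real.Gamma x := by
  have hΓx := Real.Gamma_pos_of_pos hx
  have hΓy := Real.Gamma_pos_of_pos (hx.trans_le hxy)
  have hΓxh := Real.Gamma_pos_of_pos (by linarith : 0 < x + h)
  have hΓyh := Real.Gamma_pos_of_pos (by linarith : 0 < y + h)
  have hlog := Real.convexOn_log_Gamma.map_add_add_map_le_s3 (mem_Ioi.2 hx)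
    (mem_Ioi.2 (by linarith : 0 < y + h)) hxy hh
  simp only [Function.comp_apply] at hlog
  rw [← Real.log_le_log_iff (by positivity) (by positivity),
    Real.log_mul hΓy.ne' hΓxh.ne', Real.log_mul hΓyh.ne' hΓx.ne']
  linarith

theorem gamma_ratio_le_one_second_general (θ a Δ : ℝ) (hθ : 1 ≤ θ)
    (ha0 : 0 ≤ a) (ha : a ≤ Δ - θ) :
    Real.Gamma (Δ + 1) * Real.Gamma (Δ - a) /
      (Real.Gamma (Δ + θ) * Real.Gamma (Δ - a - θ + 1)) ≤ 1 := by
  have hpos : 0 < Δ - a - θ + 1 := by linarith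
  have key := Real.Gamma_mul_Gamma_add_le (y := Δ + 1) (h := θ - 1) hpos (by linarith)
    (sub_nonneg.2 hθ)
  rw [show Δ - a - θ + 1 + (θ - 1) = Δ - a by ring, show Δ + 1 + (θ - 1) = Δ + θ by ring] at key
  rwa [div_le_one (mul_pos (Real.Gamma_pos_of_pos (by linarith)) (Real.Gamma_pos_of_pos hpos))]

/-- For `θ ≥ 1`, `Δ ≥ θ`, `0 ≤ a ≤ Δ − θ`:
`Γ(Δ+1)·Γ(Δ−a) / (Γ(Δ+θ)·Γ(Δ−a−θ+1)) ≤ 1`. -/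
theorem gamma_ratio_le_one_second (θ a Δ : ℝ) (hθ : 1 ≤ θ) (hΔ : θ ≤ Δ)
    (ha0 : 0 ≤ a) (ha : a ≤ Δ - θ) :
    Real.Gamma (Δ + 1) * Real.Gamma (Δ - a) /
      (Real.Gamma (Δ + θ) * Real.Gamma (Δ - a - θ + 1)) ≤ 1 :=
  gamma_ratio_le_one_second_general θ a Δ hθ ha0 ha
end

section
/- For N ∈ ℕ, θ > 0, a partition λ with λ₁ ≥ ⋯ ≥ λ_N ≥ 0 and ℓᵢ = λᵢ − iθ, the dual Jack polynomial evaluated at N ones equals ĴJ_λ(1^N) = ∏_{i=1}^N (1/Γ(iθ)) · ∏_{1≤i<j≤N} (Γ(ℓᵢ−ℓⱼ+1)/Γ(ℓᵢ−ℓⱼ+1−θ)) · ∏_{i=1}^N (Γ(ℓᵢ+θN+θ)/Γ(ℓᵢ+θN+1)). -/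
open Finset

noncomputable section

/-- `ℓ_i = λ_i − iθ` (1-based index `i`; here `i : Fin n` is 0-based). -/
def ell (θ : ℝ) {n : ℕ} (lam : Fin n → ℕ) (i : Fin n) : ℝ :=
  (lam i : ℝ) - ((i : ℕ) + 1) * θ

/-- `J_λ(1^N) = ∏_{i=1}^N Γ(θ)/Γ(iθ) · ∏_{i<j} Γ(ℓᵢ−ℓⱼ+θ)/Γ(ℓᵢ−ℓⱼ)`. -/
def jackOne (θ : ℝ) {n : ℕ} (lam : Fin n → ℕ) : ℝ :=
  (∏ i : Fin n, Real.Gamma θ / Real.Gamma (((i : ℕ) + 1) * θ)) *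
    ∏ i : Fin n, ∏ j ∈ Finset.univ.filter (fun j => i < j),
      Real.Gamma (ell θ lam i - ell θ lam j + θ) / Real.Gamma (ell θ lam i - ell θ lam j)

open scoped Classical in
/-- `λ'_j`, the `j`-th column length of the Young diagram `λ` (for `j ≥ 1`). -/
def conjugatePart {n : ℕ} (lam : Fin n → ℕ) (j : ℕ) : ℕ :=
  (Finset.univ.filter (fun p : Fin n => j ≤ lam p)).card

/- ### Auxiliary lemmas -/

lemma gamma_prod_asc (y : ℝ) (hy : 0 < y) (m : ℕ) :
    Real.Gamma (y + m) = Real.Gamma y * ∏ k ∈ Finset.range m, (y + k) := by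
  induction m with
  | zero => simp
  | succ m ih =>
    have hne : y + m ≠ 0 := by positivity
    have : Real.Gamma (y + (m + 1 : ℕ)) = (y + m) * Real.Gamma (y + m) := by
      rw [show (y + (m+1:ℕ)) = (y + m) + 1 by push_cast; ring, Real.Gamma_add_one hne]
    rw [this, ih, Finset.prod_range_succ]; ring

lemma prod_Icc_gamma (x c : ℝ) (m : ℕ) (h : 0 < x - m + c) :
    ∏ j ∈ Finset.Icc 1 m, (x - j + c) = Real.Gamma (x + c) / Real.Gamma (x - m + c) := by
  induction m with
  | zero =>
    have : (0:ℝ) < x + c := by simpa using h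
    simp [div_self (ne_of_gt (Real.Gamma_pos_of_pos this))]
  | succ m ih =>
    have h' : 0 < x - m + c := by push_cast at h ⊢; linarith
    have hne : x - (m+1:ℕ) + c ≠ 0 := ne_of_gt h
    have hgne : Real.Gamma (x - (m+1:ℕ) + c) ≠ 0 := ne_of_gt (Real.Gamma_pos_of_pos h)
    have hg : Real.Gamma (x - m + c) = (x - (m+1:ℕ) + c) * Real.Gamma (x - (m+1:ℕ) + c) := by
      rw [show (x - m + c) = (x - (m+1:ℕ) + c) + 1 by push_cast; ring, Real.Gamma_add_one hne]
    rw [Finset.prod_Icc_succ_top (Nat.one_le_iff_ne_zero.mpr (Nat.succ_ne_zero m)), ih h', hg]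
    push_cast at hne hgne ⊢
    field_simp

lemma prod_frac_gamma (x c d : ℝ) (m : ℕ) (hc : 0 < x - m + c) (hd : 0 < x - m + d) :
    ∏ j ∈ Finset.Icc 1 m, ((x - j + c) / (x - j + d))
      = (Real.Gamma (x + c) / Real.Gamma (x - m + c))
        / (Real.Gamma (x + d) / Real.Gamma (x - m + d)) := by
  rw [Finset.prod_div_distrib, prod_Icc_gamma _ _ _ hc, prod_Icc_gamma _ _ _ hd]

lemma conj_of_all {n : ℕ} (lam : Fin n → ℕ) (j : ℕ) (h : ∀ p, j ≤ lam p) :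
    conjugatePart lam j = n := by
  classical
  rw [conjugatePart]
  rw [Finset.filter_true_of_mem (fun p _ => h p)]
  simp

lemma conj_castSucc {n : ℕ} (lam : Fin (n+1) → ℕ) (j : ℕ) :
    conjugatePart lam j
      = conjugatePart (fun i : Fin n => lam i.castSucc) j
        + (if j ≤ lam (Fin.last n) then 1 else 0) := by
  classical
  rw [conjugatePart, conjugatePart]
  rw [Finset.card_filter, Finset.card_filter, Fin.sum_univ_castSucc]

lemma hIoc (x : ℕ) : Finset.Icc 1 x = Finset.Ioc 0 x := by
  ext k; simp [Nat.lt_iff_add_one_le]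

lemma filter_prod_split {n : ℕ} (f : Fin (n+1) → Fin (n+1) → ℝ) :
    (∏ i : Fin (n+1), ∏ j ∈ Finset.univ.filter (fun j => i < j), f i j)
      = (∏ i : Fin n, ∏ j ∈ Finset.univ.filter (fun j => i < j), f i.castSucc j.castSucc)
        * ∏ i : Fin n, f i.castSucc (Fin.last n) := by
  classical
  simp only [Finset.prod_filter]
  rw [Fin.prod_univ_castSucc (f := fun i => ∏ j : Fin (n+1), if i < j then f i j else 1)]
  have h1 : (∏ j : Fin (n+1), if Fin.last n < j then f (Fin.last n) j else 1) = 1 := by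
    apply Finset.prod_eq_one; intro j _
    rw [if_neg (not_lt.mpr (Fin.le_last j))]
  have h2 : ∀ i : Fin n, (∏ j : Fin (n+1), if i.castSucc < j then f i.castSucc j else 1)
      = (∏ j : Fin n, if i < j then f i.castSucc j.castSucc else 1) * f i.castSucc (Fin.last n) := by
    intro i
    rw [Fin.prod_univ_castSucc (f := fun j => if i.castSucc < j then f i.castSucc j else 1)]
    rw [if_pos (Fin.castSucc_lt_last i)]
    simp only [Fin.castSucc_lt_castSucc_iff]
  rw [h1, mul_one, Finset.prod_congr rfl (fun i _ => h2 i), Finset.prod_mul_distrib]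


lemma alg1 (a b c d e f g h : ℝ) (hb : b ≠ 0) (hc : c ≠ 0) (he : e ≠ 0)
    (hf : f ≠ 0) (hg : g ≠ 0) (hh : h ≠ 0) :
    (a / b) / (c / d) = ((e / f) / (g / h)) * ((a * g * d * f) / (b * h * c * e)) := by
  field_simp

lemma alg2 (a b c d e f g h : ℝ) (hb : b ≠ 0) (hc : c ≠ 0) (he : e ≠ 0)
    (hf : f ≠ 0) (hg : g ≠ 0) (hh : h ≠ 0) :
    (e / g) * ((b / f) * ((a * g * d * f) / (b * h * c * e))) = (d / h) * (a / c) := by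
  field_simp

set_option maxHeartbeats 2000000 in
lemma key (θ : ℝ) (hθ : 0 < θ) (n : ℕ) :
    ∀ (lam : Fin n → ℕ), Antitone lam →
    ((∏ i : Fin n, Real.Gamma θ / Real.Gamma (((i : ℕ) + 1) * θ)) *
      ∏ i : Fin n, ∏ j ∈ Finset.univ.filter (fun j => i < j),
        Real.Gamma (ell θ lam i - ell θ lam j + θ) / Real.Gamma (ell θ lam i - ell θ lam j)) *
      (∏ i : Fin n, ∏ j ∈ Finset.Icc 1 (lam i),
        (((lam i : ℝ) - (j : ℝ) + θ * ((conjugatePart lam j : ℝ) - ((i : ℕ) + 1)) + θ) /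
          ((lam i : ℝ) - (j : ℝ) + θ * ((conjugatePart lam j : ℝ) - ((i : ℕ) + 1)) + 1)))
    = (∏ i : Fin n, 1 / Real.Gamma (((i : ℕ) + 1) * θ)) *
        (∏ i : Fin n, ∏ j ∈ Finset.univ.filter (fun j => i < j),
          Real.Gamma (ell θ lam i - ell θ lam j + 1) /
            Real.Gamma (ell θ lam i - ell θ lam j + 1 - θ)) *
        ∏ i : Fin n,
          Real.Gamma (ell θ lam i + θ * n + θ) / Real.Gamma (ell θ lam i + θ * n + 1) := by
  induction n with
  | zero => intro lam _; simp
  | succ n ih =>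
    intro lam hlam
    obtain ⟨mu, hmu⟩ : ∃ mu : Fin n → ℕ, mu = fun p => lam p.castSucc := ⟨_, rfl⟩
    have hmuanti : Antitone mu := by
      rw [hmu]; exact fun a b hab => hlam (Fin.castSucc_le_castSucc_iff.mpr hab)
    have ht : ∀ i, lam (Fin.last n) ≤ lam i := fun i => hlam (Fin.le_last i)
    have htm : ∀ p : Fin n, lam (Fin.last n) ≤ mu p := by
      intro p; rw [hmu]; exact ht p.castSucc
    have hell : ∀ p : Fin n, ell θ lam p.castSucc = ell θ mu p := by
      intro p; rw [hmu]; rfl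
    have helllast : ell θ lam (Fin.last n) = (lam (Fin.last n) : ℝ) - ((n:ℝ)+1)*θ := by
      simp [ell, Fin.val_last]
    have gne : ∀ {x : ℝ}, 0 < x → Real.Gamma x ≠ 0 :=
      fun hx => ne_of_gt (Real.Gamma_pos_of_pos hx)
    have hx : ∀ i : Fin n, ((lam (Fin.last n) : ℕ) : ℝ) ≤ (mu i : ℝ) :=
      fun i => Nat.cast_le.mpr (htm i)
    have hi1 : ∀ i : Fin n, ((i : ℕ) : ℝ) + 1 ≤ (n : ℝ) := by
      intro i; exact_mod_cast i.isLt
    have hmul : ∀ i : Fin n, θ * (((i:ℕ):ℝ) + 1) ≤ θ * (n : ℝ) :=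
      fun i => mul_le_mul_of_nonneg_left (hi1 i) hθ.le
    have hD0 : ∀ i : Fin n, 0 < ell θ mu i - ell θ lam (Fin.last n) := by
      intro i
      simp only [ell, Fin.val_last]
      push_cast
      nlinarith [hθ, hx i, hmul i]
    have hD1θ : ∀ i : Fin n, 0 < ell θ mu i - ell θ lam (Fin.last n) + 1 - θ := by
      intro i
      simp only [ell, Fin.val_last]
      push_cast
      nlinarith [hθ, hx i, hmul i]
    have hL0 : ∀ i : Fin n, 0 < ell θ mu i + θ * (((n+1:ℕ)) : ℝ) := by
      intro i
      simp only [ell, Fin.val_last]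
      push_cast
      nlinarith [hθ, hx i, hmul i, (show (0:ℝ) ≤ ((lam (Fin.last n) : ℕ) : ℝ) from Nat.cast_nonneg _)]
    have hL1θ : ∀ i : Fin n, 0 < ell θ mu i + θ * (((n+1:ℕ)) : ℝ) + 1 - θ := by
      intro i
      simp only [ell, Fin.val_last]
      push_cast
      nlinarith [hθ, hx i, hmul i, (show (0:ℝ) ≤ ((lam (Fin.last n) : ℕ) : ℝ) from Nat.cast_nonneg _)]
    have hT1 : (0:ℝ) < (lam (Fin.last n) : ℝ) + 1 := by positivity
    have hTθ : (0:ℝ) < (lam (Fin.last n) : ℝ) + θ := by positivity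
    have hnθ : (0:ℝ) < ((n:ℝ) + 1) * θ := by positivity
    have ihmu := ih mu hmuanti
    -- (A) first factor of jackOne
    have hA : (∏ i : Fin (n+1), Real.Gamma θ / Real.Gamma (((i : ℕ) + 1) * θ))
        = (∏ i : Fin n, Real.Gamma θ / Real.Gamma (((i : ℕ) + 1) * θ)) * (Real.Gamma θ / Real.Gamma (((n:ℝ) + 1) * θ)) := by
      rw [Fin.prod_univ_castSucc]
      simp only [Fin.coe_castSucc, Fin.val_last]
    have hA2 : (∏ i : Fin (n+1), 1 / Real.Gamma (((i : ℕ) + 1) * θ))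
        = (∏ i : Fin n, 1 / Real.Gamma (((i : ℕ) + 1) * θ)) * (1 / Real.Gamma (((n:ℝ) + 1) * θ)) := by
      rw [Fin.prod_univ_castSucc]
      simp only [Fin.coe_castSucc, Fin.val_last]
    -- (B) second factor of jackOne
    have hB : (∏ i : Fin (n+1), ∏ j ∈ Finset.univ.filter (fun j => i < j),
          Real.Gamma (ell θ lam i - ell θ lam j + θ) / Real.Gamma (ell θ lam i - ell θ lam j))
        = (∏ i : Fin n, ∏ j ∈ Finset.univ.filter (fun j => i < j), Real.Gamma (ell θ mu i - ell θ mu j + θ) / Real.Gamma (ell θ mu i - ell θ mu j)) * (∏ i : Fin n, Real.Gamma (ell θ mu i - ell θ lam (Fin.last n) + θ) / Real.Gamma (ell θ mu i - ell θ lam (Fin.last n))) := by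
      rw [filter_prod_split (f := fun i j =>
        Real.Gamma (ell θ lam i - ell θ lam j + θ) / Real.Gamma (ell θ lam i - ell θ lam j))]
      simp only [hell]
    have hE : (∏ i : Fin (n+1), ∏ j ∈ Finset.univ.filter (fun j => i < j),
          Real.Gamma (ell θ lam i - ell θ lam j + 1) / Real.Gamma (ell θ lam i - ell θ lam j + 1 - θ))
        = (∏ i : Fin n, ∏ j ∈ Finset.univ.filter (fun j => i < j), Real.Gamma (ell θ mu i - ell θ mu j + 1) / Real.Gamma (ell θ mu i - ell θ mu j + 1 - θ)) * (∏ i : Fin n, Real.Gamma (ell θ mu i - ell θ lam (Fin.last n) + 1) / Real.Gamma (ell θ mu i - ell θ lam (Fin.last n) + 1 - θ)) := by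
      rw [filter_prod_split (f := fun i j =>
        Real.Gamma (ell θ lam i - ell θ lam j + 1) / Real.Gamma (ell θ lam i - ell θ lam j + 1 - θ))]
      simp only [hell]
    -- (F) third RHS factor
    have hF : (∏ i : Fin (n+1), Real.Gamma (ell θ lam i + θ * (((n+1:ℕ)) : ℝ) + θ) /
          Real.Gamma (ell θ lam i + θ * (((n+1:ℕ)) : ℝ) + 1))
        = (∏ i : Fin n, Real.Gamma (ell θ mu i + θ * (((n+1:ℕ)) : ℝ) + θ) / Real.Gamma (ell θ mu i + θ * (((n+1:ℕ)) : ℝ) + 1)) * (Real.Gamma ((lam (Fin.last n) : ℝ) + θ) / Real.Gamma ((lam (Fin.last n) : ℝ) + 1)) := by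
      rw [Fin.prod_univ_castSucc]
      simp only [hell]
      rw [show ell θ lam (Fin.last n) + θ * (((n+1:ℕ)) : ℝ) + θ = (lam (Fin.last n) : ℝ) + θ by rw [helllast]; push_cast; ring,
          show ell θ lam (Fin.last n) + θ * (((n+1:ℕ)) : ℝ) + 1 = (lam (Fin.last n) : ℝ) + 1 by rw [helllast]; push_cast; ring]
    -- (C) box product
    have hlastrow : (∏ j ∈ Finset.Icc 1 (lam (Fin.last n)), (((lam (Fin.last n) : ℝ) - (j : ℝ) + θ * ((conjugatePart lam j : ℝ) - (((Fin.last n : ℕ) : ℝ) + 1)) + θ) / ((lam (Fin.last n) : ℝ) - (j : ℝ) + θ * ((conjugatePart lam j : ℝ) - (((Fin.last n : ℕ) : ℝ) + 1)) + 1)))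
        = (Real.Gamma ((lam (Fin.last n) : ℝ) + θ) / (Real.Gamma θ * Real.Gamma ((lam (Fin.last n) : ℝ) + 1))) := by
      have e : ∀ j ∈ Finset.Icc 1 (lam (Fin.last n)), (((lam (Fin.last n) : ℝ) - (j : ℝ) + θ * ((conjugatePart lam j : ℝ) - (((Fin.last n : ℕ) : ℝ) + 1)) + θ) / ((lam (Fin.last n) : ℝ) - (j : ℝ) + θ * ((conjugatePart lam j : ℝ) - (((Fin.last n : ℕ) : ℝ) + 1)) + 1))
          = (((lam (Fin.last n) : ℝ) - (j:ℝ) + θ) / ((lam (Fin.last n) : ℝ) - (j:ℝ) + 1)) := by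
        intro j hj
        rw [Finset.mem_Icc] at hj
        rw [conj_of_all lam j (fun p => le_trans hj.2 (ht p))]
        push_cast [Fin.val_last]
        ring
      rw [Finset.prod_congr rfl e,
        prod_frac_gamma (lam (Fin.last n) : ℝ) θ 1 (lam (Fin.last n)) (by push_cast; linarith) (by push_cast; linarith)]
      rw [show (lam (Fin.last n) : ℝ) - ((lam (Fin.last n) : ℕ) : ℝ) + θ = θ by push_cast; ring,
          show (lam (Fin.last n) : ℝ) - ((lam (Fin.last n) : ℕ) : ℝ) + 1 = 1 by push_cast; ring,
          Real.Gamma_one]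
      rw [div_one, div_div]
    have hQ : ∀ i : Fin n, ((Real.Gamma (ell θ mu i + θ * (((n+1:ℕ)) : ℝ) + θ) / Real.Gamma (ell θ mu i - ell θ lam (Fin.last n) + θ)) / (Real.Gamma (ell θ mu i + θ * (((n+1:ℕ)) : ℝ) + 1) / Real.Gamma (ell θ mu i - ell θ lam (Fin.last n) + 1))) = ((Real.Gamma (ell θ mu i + θ * (((n+1:ℕ)) : ℝ)) / Real.Gamma (ell θ mu i - ell θ lam (Fin.last n))) / (Real.Gamma (ell θ mu i + θ * (((n+1:ℕ)) : ℝ) + 1 - θ) / Real.Gamma (ell θ mu i - ell θ lam (Fin.last n) + 1 - θ))) * ((Real.Gamma (ell θ mu i + θ * (((n+1:ℕ)) : ℝ) + θ) * Real.Gamma (ell θ mu i + θ * (((n+1:ℕ)) : ℝ) + 1 - θ) * Real.Gamma (ell θ mu i - ell θ lam (Fin.last n) + 1) * Real.Gamma (ell θ mu i - ell θ lam (Fin.last n))) / (Real.Gamma (ell θ mu i - ell θ lam (Fin.last n) + θ) * Real.Gamma (ell θ mu i - ell θ lam (Fin.last n) + 1 - θ) * Real.Gamma (ell θ mu i + θ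 * (((n+1:ℕ)) : ℝ) + 1) * Real.Gamma (ell θ mu i + θ * (((n+1:ℕ)) : ℝ)))) := by
      intro i
      have n1 := gne (hD0 i)
      have n2 := gne (show 0 < ell θ mu i - ell θ lam (Fin.last n) + θ by have := hD0 i; linarith)
      have n3 := gne (show 0 < ell θ mu i - ell θ lam (Fin.last n) + 1 by have := hD0 i; linarith)
      have n4 := gne (hD1θ i)
      have n5 := gne (hL0 i)
      have n6 := gne (show 0 < ell θ mu i + θ * (((n+1:ℕ)) : ℝ) + 1 by have := hL0 i; linarith)
      have n7 := gne (hL1θ i)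
      have n8 := gne (show 0 < ell θ mu i + θ * (((n+1:ℕ)) : ℝ) + θ by have := hL0 i; linarith)
      exact alg1 _ _ _ _ _ _ _ _ n2 n6 n5 n1 n7 n4
    have hrow : ∀ i : Fin n,
        (∏ j ∈ Finset.Icc 1 (lam i.castSucc), (((lam i.castSucc : ℝ) - (j : ℝ) + θ * ((conjugatePart lam j : ℝ) - (((i.castSucc : ℕ) : ℝ) + 1)) + θ) / ((lam i.castSucc : ℝ) - (j : ℝ) + θ * ((conjugatePart lam j : ℝ) - (((i.castSucc : ℕ) : ℝ) + 1)) + 1)))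
        = (∏ j ∈ Finset.Icc 1 (mu i), (((mu i : ℝ) - (j : ℝ) + θ * ((conjugatePart mu j : ℝ) - (((i : ℕ) : ℝ) + 1)) + θ) / ((mu i : ℝ) - (j : ℝ) + θ * ((conjugatePart mu j : ℝ) - (((i : ℕ) : ℝ) + 1)) + 1))) * ((Real.Gamma (ell θ mu i + θ * (((n+1:ℕ)) : ℝ) + θ) * Real.Gamma (ell θ mu i + θ * (((n+1:ℕ)) : ℝ) + 1 - θ) * Real.Gamma (ell θ mu i - ell θ lam (Fin.last n) + 1) * Real.Gamma (ell θ mu i - ell θ lam (Fin.last n))) / (Real.Gamma (ell θ mu i - ell θ lam (Fin.last n) + θ) * Real.Gamma (ell θ mu i - ell θ lam (Fin.last n) + 1 - θ) * Real.Gamma (ell θ mu i + θ * (((n+1:ℕ)) : ℝ) + 1) * Real.Gamma (ell θ mu i + θ * (((n+1:ℕ)) : ℝ)))) := by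
      intro i
      have hmi : lam i.castSucc = mu i := by rw [hmu]
      simp only [hmi, Fin.coe_castSucc]
      rw [hIoc (mu i), ← Finset.prod_Ioc_consecutive _ (Nat.zero_le (lam (Fin.last n))) (htm i),
        ← hIoc (lam (Fin.last n))]
      conv_rhs => rw [← Finset.prod_Ioc_consecutive _ (Nat.zero_le (lam (Fin.last n))) (htm i),
        ← hIoc (lam (Fin.last n))]
      have hmid : ∀ j ∈ Finset.Ioc (lam (Fin.last n)) (mu i), (((mu i : ℝ) - (j : ℝ) + θ * ((conjugatePart lam j : ℝ) - (((i : ℕ) : ℝ) + 1)) + θ) / ((mu i : ℝ) - (j : ℝ) + θ * ((conjugatePart lam j : ℝ) - (((i : ℕ) : ℝ) + 1)) + 1))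
          = (((mu i : ℝ) - (j : ℝ) + θ * ((conjugatePart mu j : ℝ) - (((i : ℕ) : ℝ) + 1)) + θ) / ((mu i : ℝ) - (j : ℝ) + θ * ((conjugatePart mu j : ℝ) - (((i : ℕ) : ℝ) + 1)) + 1)) := by
        intro j hj
        rw [Finset.mem_Ioc] at hj
        rw [conj_castSucc lam j, if_neg (not_le.mpr hj.1), add_zero, ← hmu]
      have hheadL : (∏ j ∈ Finset.Icc 1 (lam (Fin.last n)), (((mu i : ℝ) - (j : ℝ) + θ * ((conjugatePart lam j : ℝ) - (((i : ℕ) : ℝ) + 1)) + θ) / ((mu i : ℝ) - (j : ℝ) + θ * ((conjugatePart lam j : ℝ) - (((i : ℕ) : ℝ) + 1)) + 1)))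
          = ((Real.Gamma (ell θ mu i + θ * (((n+1:ℕ)) : ℝ) + θ) / Real.Gamma (ell θ mu i - ell θ lam (Fin.last n) + θ)) / (Real.Gamma (ell θ mu i + θ * (((n+1:ℕ)) : ℝ) + 1) / Real.Gamma (ell θ mu i - ell θ lam (Fin.last n) + 1))) := by
        have e : ∀ j ∈ Finset.Icc 1 (lam (Fin.last n)), (((mu i : ℝ) - (j : ℝ) + θ * ((conjugatePart lam j : ℝ) - (((i : ℕ) : ℝ) + 1)) + θ) / ((mu i : ℝ) - (j : ℝ) + θ * ((conjugatePart lam j : ℝ) - (((i : ℕ) : ℝ) + 1)) + 1))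
            = (((mu i : ℝ) - (j:ℝ) + (θ * ((((n+1:ℕ)) : ℝ) - (((i : ℕ) : ℝ) + 1)) + θ)) / ((mu i : ℝ) - (j:ℝ) + (θ * ((((n+1:ℕ)) : ℝ) - (((i : ℕ) : ℝ) + 1)) + 1))) := by
          intro j hj
          rw [Finset.mem_Icc] at hj
          rw [conj_of_all lam j (fun p => le_trans hj.2 (ht p))]
          push_cast
          ring
        rw [Finset.prod_congr rfl e,
          prod_frac_gamma ((mu i : ℝ)) (θ * ((((n+1:ℕ)) : ℝ) - (((i : ℕ) : ℝ) + 1)) + θ) (θ * ((((n+1:ℕ)) : ℝ) - (((i : ℕ) : ℝ) + 1)) + 1) (lam (Fin.last n))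
            (by push_cast; nlinarith [hθ, hx i, hmul i])
            (by push_cast; nlinarith [hθ, hx i, hmul i])]
        rw [show (mu i : ℝ) + (θ * ((((n+1:ℕ)) : ℝ) - (((i : ℕ) : ℝ) + 1)) + θ) = ell θ mu i + θ * (((n+1:ℕ)) : ℝ) + θ by
              simp only [ell, Fin.val_last]; push_cast; ring,
            show (mu i : ℝ) - ((lam (Fin.last n) : ℕ) : ℝ) + (θ * ((((n+1:ℕ)) : ℝ) - (((i : ℕ) : ℝ) + 1)) + θ) = ell θ mu i - ell θ lam (Fin.last n) + θ by
              simp only [ell, Fin.val_last]; push_cast; ring,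
            show (mu i : ℝ) + (θ * ((((n+1:ℕ)) : ℝ) - (((i : ℕ) : ℝ) + 1)) + 1) = ell θ mu i + θ * (((n+1:ℕ)) : ℝ) + 1 by
              simp only [ell, Fin.val_last]; push_cast; ring,
            show (mu i : ℝ) - ((lam (Fin.last n) : ℕ) : ℝ) + (θ * ((((n+1:ℕ)) : ℝ) - (((i : ℕ) : ℝ) + 1)) + 1) = ell θ mu i - ell θ lam (Fin.last n) + 1 by
              simp only [ell, Fin.val_last]; push_cast; ring]
      have hheadM : (∏ j ∈ Finset.Icc 1 (lam (Fin.last n)), (((mu i : ℝ) - (j : ℝ) + θ * ((conjugatePart mu j : ℝ) - (((i : ℕ) : ℝ) + 1)) + θ) / ((mu i : ℝ) - (j : ℝ) + θ * ((conjugatePart mu j : ℝ) - (((i : ℕ) : ℝ) + 1)) + 1)))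
          = ((Real.Gamma (ell θ mu i + θ * (((n+1:ℕ)) : ℝ)) / Real.Gamma (ell θ mu i - ell θ lam (Fin.last n))) / (Real.Gamma (ell θ mu i + θ * (((n+1:ℕ)) : ℝ) + 1 - θ) / Real.Gamma (ell θ mu i - ell θ lam (Fin.last n) + 1 - θ))) := by
        have e : ∀ j ∈ Finset.Icc 1 (lam (Fin.last n)), (((mu i : ℝ) - (j : ℝ) + θ * ((conjugatePart mu j : ℝ) - (((i : ℕ) : ℝ) + 1)) + θ) / ((mu i : ℝ) - (j : ℝ) + θ * ((conjugatePart mu j : ℝ) - (((i : ℕ) : ℝ) + 1)) + 1))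
            = (((mu i : ℝ) - (j:ℝ) + (θ * (((n:ℕ) : ℝ) - (((i : ℕ) : ℝ) + 1)) + θ)) / ((mu i : ℝ) - (j:ℝ) + (θ * (((n:ℕ) : ℝ) - (((i : ℕ) : ℝ) + 1)) + 1))) := by
          intro j hj
          rw [Finset.mem_Icc] at hj
          rw [conj_of_all mu j (fun q => le_trans hj.2 (htm q))]
          push_cast
          ring
        rw [Finset.prod_congr rfl e,
          prod_frac_gamma ((mu i : ℝ)) (θ * (((n:ℕ) : ℝ) - (((i : ℕ) : ℝ) + 1)) + θ) (θ * (((n:ℕ) : ℝ) - (((i : ℕ) : ℝ) + 1)) + 1) (lam (Fin.last n))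
            (by push_cast; nlinarith [hθ, hx i, hmul i])
            (by push_cast; nlinarith [hθ, hx i, hmul i])]
        rw [show (mu i : ℝ) + (θ * (((n:ℕ) : ℝ) - (((i : ℕ) : ℝ) + 1)) + θ) = ell θ mu i + θ * (((n+1:ℕ)) : ℝ) by
              simp only [ell, Fin.val_last]; push_cast; ring,
            show (mu i : ℝ) - ((lam (Fin.last n) : ℕ) : ℝ) + (θ * (((n:ℕ) : ℝ) - (((i : ℕ) : ℝ) + 1)) + θ) = ell θ mu i - ell θ lam (Fin.last n) by
              simp only [ell, Fin.val_last]; push_cast; ring,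
            show (mu i : ℝ) + (θ * (((n:ℕ) : ℝ) - (((i : ℕ) : ℝ) + 1)) + 1) = ell θ mu i + θ * (((n+1:ℕ)) : ℝ) + 1 - θ by
              simp only [ell, Fin.val_last]; push_cast; ring,
            show (mu i : ℝ) - ((lam (Fin.last n) : ℕ) : ℝ) + (θ * (((n:ℕ) : ℝ) - (((i : ℕ) : ℝ) + 1)) + 1) = ell θ mu i - ell θ lam (Fin.last n) + 1 - θ by
              simp only [ell, Fin.val_last]; push_cast; ring]
      rw [Finset.prod_congr rfl hmid, hheadL, hheadM, hQ i]
      ring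
    have hC : (∏ i : Fin (n+1), ∏ j ∈ Finset.Icc 1 (lam i), (((lam i : ℝ) - (j : ℝ) + θ * ((conjugatePart lam j : ℝ) - (((i : ℕ) : ℝ) + 1)) + θ) / ((lam i : ℝ) - (j : ℝ) + θ * ((conjugatePart lam j : ℝ) - (((i : ℕ) : ℝ) + 1)) + 1)))
        = (∏ i : Fin n, ∏ j ∈ Finset.Icc 1 (mu i), (((mu i : ℝ) - (j : ℝ) + θ * ((conjugatePart mu j : ℝ) - ((i : ℕ) + 1)) + θ) / ((mu i : ℝ) - (j : ℝ) + θ * ((conjugatePart mu j : ℝ) - ((i : ℕ) + 1)) + 1))) * ((Real.Gamma ((lam (Fin.last n) : ℝ) + θ) / (Real.Gamma θ * Real.Gamma ((lam (Fin.last n) : ℝ) + 1))) * ∏ i : Fin n, ((Real.Gamma (ell θ mu i + θ * (((n+1:ℕ)) : ℝ) + θ) * Real.Gamma (ell θ mu i + θ * (((n+1:ℕ)) : ℝ) + 1 - θ) * Real.Gamma (ell θ mu i - ell θ lam (Fin.last n) + 1) * Real.Gamma (ell θ mu i - ell θ lam (Fin.last n))) / (Real.Gamma (ell θ mu i - ell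 θ lam (Fin.last n) + θ) * Real.Gamma (ell θ mu i - ell θ lam (Fin.last n) + 1 - θ) * Real.Gamma (ell θ mu i + θ * (((n+1:ℕ)) : ℝ) + 1) * Real.Gamma (ell θ mu i + θ * (((n+1:ℕ)) : ℝ))))) := by
      rw [Fin.prod_univ_castSucc]
      rw [Finset.prod_congr rfl (fun i _ => hrow i), hlastrow, Finset.prod_mul_distrib]
      ring
    -- per-index combination
    have hper : ∀ i : Fin n,
        (Real.Gamma (ell θ mu i + θ * (n : ℝ) + θ) / Real.Gamma (ell θ mu i + θ * (n : ℝ) + 1))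
          * ((Real.Gamma (ell θ mu i - ell θ lam (Fin.last n) + θ) / Real.Gamma (ell θ mu i - ell θ lam (Fin.last n))) * ((Real.Gamma (ell θ mu i + θ * (((n+1:ℕ)) : ℝ) + θ) * Real.Gamma (ell θ mu i + θ * (((n+1:ℕ)) : ℝ) + 1 - θ) * Real.Gamma (ell θ mu i - ell θ lam (Fin.last n) + 1) * Real.Gamma (ell θ mu i - ell θ lam (Fin.last n))) / (Real.Gamma (ell θ mu i - ell θ lam (Fin.last n) + θ) * Real.Gamma (ell θ mu i - ell θ lam (Fin.last n) + 1 - θ) * Real.Gamma (ell θ mu i + θ * (((n+1:ℕ)) : ℝ) + 1) * Real.Gamma (ell θ mu i + θ * (((n+1:ℕ)) : ℝ)))))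
        = (Real.Gamma (ell θ mu i - ell θ lam (Fin.last n) + 1) / Real.Gamma (ell θ mu i - ell θ lam (Fin.last n) + 1 - θ)) * (Real.Gamma (ell θ mu i + θ * (((n+1:ℕ)) : ℝ) + θ) / Real.Gamma (ell θ mu i + θ * (((n+1:ℕ)) : ℝ) + 1)) := by
      intro i
      rw [show ell θ mu i + θ * (n : ℝ) + θ = ell θ mu i + θ * (((n+1:ℕ)) : ℝ) by push_cast; ring,
          show ell θ mu i + θ * (n : ℝ) + 1 = ell θ mu i + θ * (((n+1:ℕ)) : ℝ) + 1 - θ by push_cast; ring]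
      have n1 := gne (hD0 i)
      have n2 := gne (show 0 < ell θ mu i - ell θ lam (Fin.last n) + θ by have := hD0 i; linarith)
      have n4 := gne (hD1θ i)
      have n5 := gne (hL0 i)
      have n6 := gne (show 0 < ell θ mu i + θ * (((n+1:ℕ)) : ℝ) + 1 by have := hL0 i; linarith)
      have n7 := gne (hL1θ i)
      exact alg2 _ _ _ _ _ _ _ _ n2 n6 n5 n1 n7 n4
    have hprodm : (∏ i : Fin n, Real.Gamma (ell θ mu i + θ * (n : ℝ) + θ) / Real.Gamma (ell θ mu i + θ * (n : ℝ) + 1)) * ((∏ i : Fin n, Real.Gamma (ell θ mu i - ell θ lam (Fin.last n) + θ) / Real.Gamma (ell θ mu i - ell θ lam (Fin.last n))) * (∏ i : Fin n, ((Real.Gamma (ell θ mu i + θ * (((n+1:ℕ)) : ℝ) + θ) * Real.Gamma (ell θ mu i + θ * (((n+1:ℕ)) : ℝ) + 1 - θ) * Real.Gamma (ell θ mu i - ell θ lam (Fin.last n) + 1) * Real.Gamma (ell θ mu i - ell θ lam (Fin.last n))) / (Real.Gamma (ell θ mu i - ell θ lam (Fin.last n) + θ) * Real.Gamma (ell θ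 mu i - ell θ lam (Fin.last n) + 1 - θ) * Real.Gamma (ell θ mu i + θ * (((n+1:ℕ)) : ℝ) + 1) * Real.Gamma (ell θ mu i + θ * (((n+1:ℕ)) : ℝ)))))) = (∏ i : Fin n, Real.Gamma (ell θ mu i - ell θ lam (Fin.last n) + 1) / Real.Gamma (ell θ mu i - ell θ lam (Fin.last n) + 1 - θ)) * (∏ i : Fin n, Real.Gamma (ell θ mu i + θ * (((n+1:ℕ)) : ℝ) + θ) / Real.Gamma (ell θ mu i + θ * (((n+1:ℕ)) : ℝ) + 1)) := by
      rw [← Finset.prod_mul_distrib, ← Finset.prod_mul_distrib, ← Finset.prod_mul_distrib]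
      exact Finset.prod_congr rfl (fun i _ => hper i)
    have hscal : (Real.Gamma θ / Real.Gamma (((n:ℝ) + 1) * θ)) * (Real.Gamma ((lam (Fin.last n) : ℝ) + θ) / (Real.Gamma θ * Real.Gamma ((lam (Fin.last n) : ℝ) + 1))) = (1 / Real.Gamma (((n:ℝ) + 1) * θ)) * (Real.Gamma ((lam (Fin.last n) : ℝ) + θ) / Real.Gamma ((lam (Fin.last n) : ℝ) + 1)) := by
      have h1 : Real.Gamma θ ≠ 0 := gne hθ
      have h2 : Real.Gamma (((n:ℝ) + 1) * θ) ≠ 0 := gne hnθ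
      have h3 : Real.Gamma ((lam (Fin.last n) : ℝ) + 1) ≠ 0 := gne hT1
      field_simp
    -- assemble
    rw [hA, hB, hC, hA2, hE, hF]
    calc ((∏ i : Fin n, Real.Gamma θ / Real.Gamma (((i : ℕ) + 1) * θ)) * (Real.Gamma θ / Real.Gamma (((n:ℝ) + 1) * θ)) * ((∏ i : Fin n, ∏ j ∈ Finset.univ.filter (fun j => i < j), Real.Gamma (ell θ mu i - ell θ mu j + θ) / Real.Gamma (ell θ mu i - ell θ mu j)) * (∏ i : Fin n, Real.Gamma (ell θ mu i - ell θ lam (Fin.last n) + θ) / Real.Gamma (ell θ mu i - ell θ lam (Fin.last n))))) * ((∏ i : Fin n, ∏ j ∈ Finset.Icc 1 (mu i), (((mu i : ℝ) - (j : ℝ) + θ * ((conjugatePart mu j : ℝ) - ((i : ℕ) + 1)) + θ) / ((mu i : ℝ) - (j : ℝ) + θ * ((conjugatePart mu j : ℝ) - ((i : ℕ) + 1)) + 1))) * ((Real.Gamma ((lam (Fin.last n) : ℝ) + θ) / (Real.Gamma θ * Real.Gamma ((lam (Fin.last n) : ℝ) + 1))) * ∏ i : Fin n, ((Real.Gamma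 (ell θ mu i + θ * (((n+1:ℕ)) : ℝ) + θ) * Real.Gamma (ell θ mu i + θ * (((n+1:ℕ)) : ℝ) + 1 - θ) * Real.Gamma (ell θ mu i - ell θ lam (Fin.last n) + 1) * Real.Gamma (ell θ mu i - ell θ lam (Fin.last n))) / (Real.Gamma (ell θ mu i - ell θ lam (Fin.last n) + θ) * Real.Gamma (ell θ mu i - ell θ lam (Fin.last n) + 1 - θ) * Real.Gamma (ell θ mu i + θ * (((n+1:ℕ)) : ℝ) + 1) * Real.Gamma (ell θ mu i + θ * (((n+1:ℕ)) : ℝ))))))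
        = (((∏ i : Fin n, Real.Gamma θ / Real.Gamma (((i : ℕ) + 1) * θ)) * (∏ i : Fin n, ∏ j ∈ Finset.univ.filter (fun j => i < j), Real.Gamma (ell θ mu i - ell θ mu j + θ) / Real.Gamma (ell θ mu i - ell θ mu j))) * (∏ i : Fin n, ∏ j ∈ Finset.Icc 1 (mu i), (((mu i : ℝ) - (j : ℝ) + θ * ((conjugatePart mu j : ℝ) - ((i : ℕ) + 1)) + θ) / ((mu i : ℝ) - (j : ℝ) + θ * ((conjugatePart mu j : ℝ) - ((i : ℕ) + 1)) + 1))))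
            * (((Real.Gamma θ / Real.Gamma (((n:ℝ) + 1) * θ)) * (Real.Gamma ((lam (Fin.last n) : ℝ) + θ) / (Real.Gamma θ * Real.Gamma ((lam (Fin.last n) : ℝ) + 1)))) * ((∏ i : Fin n, Real.Gamma (ell θ mu i - ell θ lam (Fin.last n) + θ) / Real.Gamma (ell θ mu i - ell θ lam (Fin.last n))) * (∏ i : Fin n, ((Real.Gamma (ell θ mu i + θ * (((n+1:ℕ)) : ℝ) + θ) * Real.Gamma (ell θ mu i + θ * (((n+1:ℕ)) : ℝ) + 1 - θ) * Real.Gamma (ell θ mu i - ell θ lam (Fin.last n) + 1) * Real.Gamma (ell θ mu i - ell θ lam (Fin.last n))) / (Real.Gamma (ell θ mu i - ell θ lam (Fin.last n) + θ) * Real.Gamma (ell θ mu i - ell θ lam (Fin.last n) + 1 - θ) * Real.Gamma (ell θ mu i + θ * (((n+1:ℕ)) : ℝ) + 1) * Real.Gamma (ell θ mu i + θ * (((n+1:ℕ)) : ℝ))))))) := by ring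
      _ = ((∏ i : Fin n, 1 / Real.Gamma (((i : ℕ) + 1) * θ)) * (∏ i : Fin n, ∏ j ∈ Finset.univ.filter (fun j => i < j), Real.Gamma (ell θ mu i - ell θ mu j + 1) / Real.Gamma (ell θ mu i - ell θ mu j + 1 - θ)) * (∏ i : Fin n, Real.Gamma (ell θ mu i + θ * (n : ℝ) + θ) / Real.Gamma (ell θ mu i + θ * (n : ℝ) + 1)))
            * (((Real.Gamma θ / Real.Gamma (((n:ℝ) + 1) * θ)) * (Real.Gamma ((lam (Fin.last n) : ℝ) + θ) / (Real.Gamma θ * Real.Gamma ((lam (Fin.last n) : ℝ) + 1)))) * ((∏ i : Fin n, Real.Gamma (ell θ mu i - ell θ lam (Fin.last n) + θ) / Real.Gamma (ell θ mu i - ell θ lam (Fin.last n))) * (∏ i : Fin n, ((Real.Gamma (ell θ mu i + θ * (((n+1:ℕ)) : ℝ) + θ) * Real.Gamma (ell θ mu i + θ * (((n+1:ℕ)) : ℝ) + 1 - θ) * Real.Gamma (ell θ mu i - ell θ lam (Fin.last n) + 1) * Real.Gamma (ell θ mu i - ell θ lam (Fin.last n))) / (Real.Gamma (ell θ mu i -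 ell θ lam (Fin.last n) + θ) * Real.Gamma (ell θ mu i - ell θ lam (Fin.last n) + 1 - θ) * Real.Gamma (ell θ mu i + θ * (((n+1:ℕ)) : ℝ) + 1) * Real.Gamma (ell θ mu i + θ * (((n+1:ℕ)) : ℝ))))))) := by rw [ihmu]
      _ = ((∏ i : Fin n, 1 / Real.Gamma (((i : ℕ) + 1) * θ)) * (∏ i : Fin n, ∏ j ∈ Finset.univ.filter (fun j => i < j), Real.Gamma (ell θ mu i - ell θ mu j + 1) / Real.Gamma (ell θ mu i - ell θ mu j + 1 - θ))) * ((∏ i : Fin n, Real.Gamma (ell θ mu i + θ * (n : ℝ) + θ) / Real.Gamma (ell θ mu i + θ * (n : ℝ) + 1)) * ((∏ i : Fin n, Real.Gamma (ell θ mu i - ell θ lam (Fin.last n) + θ) / Real.Gamma (ell θ mu i - ell θ lam (Fin.last n))) * (∏ i : Fin n, ((Real.Gamma (ell θ mu i + θ * (((n+1:ℕ)) : ℝ) + θ) * Real.Gamma (ell θ mu i + θ * (((n+1:ℕ)) : ℝ) + 1 - θ) * Real.Gamma (ell θ mu i - ell θ lam (Fin.last n) + 1) * Real.Gamma (ell θ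 mu i - ell θ lam (Fin.last n))) / (Real.Gamma (ell θ mu i - ell θ lam (Fin.last n) + θ) * Real.Gamma (ell θ mu i - ell θ lam (Fin.last n) + 1 - θ) * Real.Gamma (ell θ mu i + θ * (((n+1:ℕ)) : ℝ) + 1) * Real.Gamma (ell θ mu i + θ * (((n+1:ℕ)) : ℝ)))))))
            * ((Real.Gamma θ / Real.Gamma (((n:ℝ) + 1) * θ)) * (Real.Gamma ((lam (Fin.last n) : ℝ) + θ) / (Real.Gamma θ * Real.Gamma ((lam (Fin.last n) : ℝ) + 1)))) := by ring
      _ = ((∏ i : Fin n, 1 / Real.Gamma (((i : ℕ) + 1) * θ)) * (∏ i : Fin n, ∏ j ∈ Finset.univ.filter (fun j => i < j), Real.Gamma (ell θ mu i - ell θ mu j + 1) / Real.Gamma (ell θ mu i - ell θ mu j + 1 - θ))) * ((∏ i : Fin n, Real.Gamma (ell θ mu i - ell θ lam (Fin.last n) + 1) / Real.Gamma (ell θ mu i - ell θ lam (Fin.last n) + 1 - θ)) * (∏ i : Fin n, Real.Gamma (ell θ mu i + θ * (((n+1:ℕ)) : ℝ) + θ) / Real.Gamma (ell θ mu i + θ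 * (((n+1:ℕ)) : ℝ) + 1))) * ((1 / Real.Gamma (((n:ℝ) + 1) * θ)) * (Real.Gamma ((lam (Fin.last n) : ℝ) + θ) / Real.Gamma ((lam (Fin.last n) : ℝ) + 1))) := by rw [hprodm, hscal]
      _ = (∏ i : Fin n, 1 / Real.Gamma (((i : ℕ) + 1) * θ)) * (1 / Real.Gamma (((n:ℝ) + 1) * θ)) * ((∏ i : Fin n, ∏ j ∈ Finset.univ.filter (fun j => i < j), Real.Gamma (ell θ mu i - ell θ mu j + 1) / Real.Gamma (ell θ mu i - ell θ mu j + 1 - θ)) * (∏ i : Fin n, Real.Gamma (ell θ mu i - ell θ lam (Fin.last n) + 1) / Real.Gamma (ell θ mu i - ell θ lam (Fin.last n) + 1 - θ))) * ((∏ i : Fin n, Real.Gamma (ell θ mu i + θ * (((n+1:ℕ)) : ℝ) + θ) / Real.Gamma (ell θ mu i + θ * (((n+1:ℕ)) : ℝ) + 1)) * (Real.Gamma ((lam (Fin.last n) : ℝ) + θ) / Real.Gamma ((lam (Fin.last n) : ℝ) + 1))) := by ring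

/-- Evaluation of the dual Jack polynomial at `N` ones:
`Ĵ_λ(1^N) = J_λ(1^N) · ∏_{□∈λ} (a(□)+θℓ(□)+θ)/(a(□)+θℓ(□)+1)` equals
`∏_{i=1}^N 1/Γ(iθ) · ∏_{i<j} Γ(ℓᵢ−ℓⱼ+1)/Γ(ℓᵢ−ℓⱼ+1−θ) · ∏_i Γ(ℓᵢ+θN+θ)/Γ(ℓᵢ+θN+1)`,
where for the box `□=(i,j)` (1-based), `a(□)=λᵢ−j` and `ℓ(□)=λ'ⱼ−i`. -/
theorem dual_jack_eval (θ : ℝ) (hθ : 0 < θ) (n : ℕ)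
    (lam : Fin n → ℕ) (hlam : Antitone lam) :
    jackOne θ lam *
        ∏ i : Fin n, ∏ j ∈ Finset.Icc 1 (lam i),
          (((lam i : ℝ) - (j : ℝ) + θ * ((conjugatePart lam j : ℝ) - ((i : ℕ) + 1)) + θ) /
            ((lam i : ℝ) - (j : ℝ) + θ * ((conjugatePart lam j : ℝ) - ((i : ℕ) + 1)) + 1)) =
      (∏ i : Fin n, 1 / Real.Gamma (((i : ℕ) + 1) * θ)) *
        (∏ i : Fin n, ∏ j ∈ Finset.univ.filter (fun j => i < j),
          Real.Gamma (ell θ lam i - ell θ lam j + 1) /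
            Real.Gamma (ell θ lam i - ell θ lam j + 1 - θ)) *
        ∏ i : Fin n,
          Real.Gamma (ell θ lam i + θ * n + θ) / Real.Gamma (ell θ lam i + θ * n + 1) := by
  rw [jackOne]
  exact key θ hθ n lam hlam

end
end

section
/- Suppose b ≥ a > 0 are integers, θ is an arbitrary positive number, and λ, μ are partitions with μ interlacing λ (λ₁ ≥ μ₁ ≥ λ₂ ≥ ⋯). Set ℓ_q = λ_q − qθ and m_r = μ_r − rθ. If ℓ_q − m_r = −1 for some indices r < q, then necessarily λ_q = μ_r, θ = 1/(q−r), and moreover μ_{q−1} = λ_q, so that m_{q−1} = ℓ_q + θ. -/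
/-- If `λ ⪰ μ` interlace (with `λ ∈ ℤ^{n+1}`, `μ ∈ ℤ^n` weakly decreasing),
`ℓ_q = λ_q − qθ`, `m_r = μ_r − rθ` (1-based indices), `r < q` and `ℓ_q − m_r = −1`,
then `λ_q = μ_r`, `θ = 1/(q−r)`, and `μ_{q−1} = λ_q`, so that `m_{q−1} = ℓ_q + θ`.
(Here the Lean indices are 0-based, so `i : Fin n` corresponds to the 1-based index `i+1`.) -/
theorem pole_collision (n : ℕ) (θ : ℝ) (hθ : 0 < θ)
    (lam : Fin (n + 1) → ℕ) (mu : Fin n → ℕ)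
    (hlam : Antitone lam) (hmu : Antitone mu)
    (hint : ∀ i : Fin n, mu i ≤ lam i.castSucc ∧ lam i.succ ≤ mu i)
    (q : Fin (n + 1)) (r : Fin n) (hrq : (r : ℕ) < (q : ℕ))
    (h : ((lam q : ℝ) - ((q : ℕ) + 1) * θ) - ((mu r : ℝ) - ((r : ℕ) + 1) * θ) = -1) :
    lam q = mu r ∧ θ = 1 / (((q : ℕ) - (r : ℕ) : ℕ) : ℝ) ∧
      mu ⟨(q : ℕ) - 1, by have := q.isLt; omega⟩ = lam q ∧
      ((mu ⟨(q : ℕ) - 1, by have := q.isLt; omega⟩ : ℝ) - (q : ℕ) * θ) =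
        ((lam q : ℝ) - ((q : ℕ) + 1) * θ) + θ := by
  have hq1 : 1 ≤ (q : ℕ) := by omega
  -- lam q ≤ mu r
  have hle1 : lam q ≤ lam r.succ := hlam (by simp [Fin.le_def]; omega)
  have hle : lam q ≤ mu r := hle1.trans (hint r).2
  -- key real equation: (q - r) * θ = lam q - mu r + 1
  set d : ℕ := (q : ℕ) - (r : ℕ) with hd
  have hd1 : 1 ≤ d := by omega
  have hdc : (d : ℝ) = (q : ℕ) - (r : ℕ) := by
    rw [hd]; push_cast [Nat.cast_sub hrq.le]; ring
  have hkey : (d : ℝ) * θ = (lam q : ℝ) - (mu r : ℝ) + 1 := by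
    rw [hdc]; linarith
  have hdθ : 0 < (d : ℝ) * θ := by
    have : (0 : ℝ) < d := by exact_mod_cast hd1
    positivity
  have hlt : (mu r : ℝ) < (lam q : ℝ) + 1 := by linarith
  have heq : lam q = mu r := by
    have : (mu r : ℕ) < lam q + 1 := by exact_mod_cast hlt
    omega
  have hdθ1 : (d : ℝ) * θ = 1 := by rw [hkey, heq]; ring
  have hdne : (d : ℝ) ≠ 0 := by
    have : (0 : ℝ) < d := by exact_mod_cast hd1
    linarith
  have hθeq : θ = 1 / (d : ℝ) := by field_simp; linarith
  -- the index q-1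
  set p : Fin n := ⟨(q : ℕ) - 1, by have := q.isLt; omega⟩ with hp
  have hpsucc : p.succ = q := by
    apply Fin.ext; simp [hp]; omega
  have h1 : lam q ≤ mu p := by rw [← hpsucc]; exact (hint p).2
  have h2 : mu p ≤ mu r := hmu (by simp [Fin.le_def, hp]; omega)
  have hmup : mu p = lam q := le_antisymm (h2.trans heq.ge) h1
  refine ⟨heq, hθeq, hmup, ?_⟩
  rw [hmup]; ring
end
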